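/- arXiv:1203.3210 — 2 statements merged into one kernel-verified Lean document; each statement's English description precedes it below -/
import Mathlib

section
/- Let A_1, B_1 be n×n real positive definite matrices, let A_2, B_2 be n×n real positive semidefinite matrices, and let w be a positive real number. Then Tr[ (A_1 − B_1)(B_1^{−1} − A_1^{−1}) + 4 (A_2 − B_2) ( (w B_1 + B_2)^{−1} − (w A_1 + A_2)^{−1} ) ] ≥ 0. -/
/-!
Put `C = wA₁ + A₂`, `D = wB₁ + B₂`, `M = A₁ - B₁` and `N = C - D`, so that `A₂ - B₂ = N - wM`.
By the resolvent identity `X⁻¹ - Y⁻¹ = X⁻¹ (Y - X) Y⁻¹` the trace equals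
`Tr[M B₁⁻¹ M A₁⁻¹] + 4 Tr[N D⁻¹ N C⁻¹] - 4w Tr[M D⁻¹ N C⁻¹]`, and completing the square in
`S = wM - 2N` (the two cross terms agree because all factors are symmetric) rewrites it as
`Tr[M B₁⁻¹ M (A₁⁻¹ - wC⁻¹)] + w Tr[M (B₁⁻¹ - wD⁻¹) M C⁻¹] + Tr[S D⁻¹ S C⁻¹]`.
Each summand is the trace of a product of two positive semidefinite matrices, hence nonnegative;
`A₁⁻¹ - wC⁻¹ = A₁⁻¹ - (A₁ + w⁻¹A₂)⁻¹ ⪰ 0` is the antitonicity of the matrix inverse.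
-/

open Matrix
open scoped ComplexOrder

namespace Matrix

section RCLike

variable {m 𝕜 : Type*} [Fintype m] [RCLike 𝕜]

theorem PosSemidef.mul_mul_of_isHermitian {Q X : Matrix m m 𝕜} (hQ : Q.PosSemidef)
    (hX : X.IsHermitian) : (X * Q * X).PosSemidef := by
  simpa only [hX.eq] using hQ.mul_mul_conjTranspose_same X

variable [DecidableEq m]

open scoped MatrixOrder in
theorem PosSemidef.trace_mul_nonneg {P Q : Matrix m m 𝕜} (hP : P.PosSemidef)
    (hQ : Q.PosSemidef) : 0 ≤ (P * Q).trace := by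
  have hR : (CFC.sqrt P).IsHermitian := (CFC.sqrt_nonneg P).posSemidef.isHermitian
  rw [← CFC.sqrt_mul_sqrt_self P hP.nonneg, mul_assoc, trace_mul_comm]
  exact (hQ.mul_mul_of_isHermitian hR).trace_nonneg

theorem PosDef.inv_sub_inv_add_posSemidef {A B : Matrix m m 𝕜} (hA : A.PosDef)
    (hB : B.PosSemidef) : (A⁻¹ - (A + B)⁻¹).PosSemidef := by
  have hC : (A + B).PosDef := hA.add_posSemidef hB
  have hCA : (A + B) * (A⁻¹ * B) = B + B * A⁻¹ * B := by
    rw [add_mul, mul_nonsing_inv_cancel_left _ _ ((isUnit_iff_isUnit_det A).mp hA.isUnit),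
      mul_assoc]
  have hform : A⁻¹ - (A + B)⁻¹ = (A + B)⁻¹ * (B + B * A⁻¹ * B) * (A + B)⁻¹ := by
    rw [inv_sub_inv (iff_of_true hA.isUnit hC.isUnit), add_sub_cancel_left, ← hCA,
      nonsing_inv_mul_cancel_left _ _ ((isUnit_iff_isUnit_det _).mp hC.isUnit)]
  rw [hform]
  exact (hB.add (hA.inv.posSemidef.mul_mul_of_isHermitian hB.isHermitian)).mul_mul_of_isHermitian
    hC.inv.isHermitian

theorem PosDef.inv_sub_smul_inv_smul_add_posSemidef {A B : Matrix m m 𝕜} (hA : A.PosDef)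
    (hB : B.PosSemidef) {w : ℝ} (hw : 0 < w) : (A⁻¹ - w • (w • A + B)⁻¹).PosSemidef := by
  have hC : (w • A + B).PosDef := (hA.smul hw).add_posSemidef hB
  have hinv : w • (w • A + B)⁻¹ = (A + w⁻¹ • B)⁻¹ := by
    refine (inv_eq_right_inv ?_).symm
    rw [show A + w⁻¹ • B = w⁻¹ • (w • A + B) by rw [smul_add, inv_smul_smul₀ hw.ne'],
      smul_mul_smul_comm, inv_mul_cancel₀ hw.ne', one_smul,
      mul_nonsing_inv _ ((isUnit_iff_isUnit_det _).mp hC.isUnit)]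
  rw [hinv]
  exact hA.inv_sub_inv_add_posSemidef (hB.smul (inv_nonneg.mpr hw.le))

end RCLike

section CommRing

variable {m R : Type*} [Fintype m] [CommRing R]

theorem trace_mul_mul_mul_eq_of_isSymm {X Y C D : Matrix m m R} (hX : X.IsSymm)
    (hY : Y.IsSymm) (hC : C.IsSymm) (hD : D.IsSymm) :
    (X * D * Y * C).trace = (Y * D * X * C).trace := by
  rw [← trace_transpose]
  simp only [transpose_mul, hX.eq, hY.eq, hC.eq, hD.eq]
  rw [trace_mul_comm]
  simp only [mul_assoc]

theorem trace_eq_completed_square {M N A' B' C' D' : Matrix m m R} (w : R) (hM : M.IsSymm)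
    (hN : N.IsSymm) (hC' : C'.IsSymm) (hD' : D'.IsSymm) :
    (M * (B' * M * A') + (4 : R) • ((N - w • M) * (D' * N * C'))).trace =
      (M * B' * M * (A' - w • C')).trace + w * (M * (B' - w • D') * M * C').trace +
        ((w • M - (2 : R) • N) * D' * (w • M - (2 : R) • N) * C').trace := by
  have hswap := trace_mul_mul_mul_eq_of_isSymm hM hN hC' hD'
  simp only [Matrix.mul_sub, Matrix.sub_mul, smul_mul_assoc, mul_smul_comm, trace_add,
    trace_sub, trace_smul, smul_eq_mul, mul_assoc] at hswap ⊢
  rw [hswap]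
  ring

end CommRing

end Matrix

/-- Furuichi-type improved trace inequality for `K = 2`:
`Tr[(A₁−B₁)(B₁⁻¹−A₁⁻¹) + 4(A₂−B₂)((wB₁+B₂)⁻¹ − (wA₁+A₂)⁻¹)] ≥ 0`. -/
theorem trace_ineq_two_improved (n : ℕ)
    (A1 B1 A2 B2 : Matrix (Fin n) (Fin n) ℝ)
    (hA1 : A1.PosDef) (hB1 : B1.PosDef)
    (hA2 : A2.PosSemidef) (hB2 : B2.PosSemidef)
    (w : ℝ) (hw : 0 < w) :
    0 ≤ Matrix.trace ((A1 - B1) * (B1⁻¹ - A1⁻¹) +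
      (4 : ℝ) • ((A2 - B2) * ((w • B1 + B2)⁻¹ - (w • A1 + A2)⁻¹))) := by
  have hC : (w • A1 + A2).PosDef := (hA1.smul hw).add_posSemidef hA2
  have hD : (w • B1 + B2).PosDef := (hB1.smul hw).add_posSemidef hB2
  have hM : (A1 - B1).IsHermitian := hA1.isHermitian.sub hB1.isHermitian
  have hN : (w • A1 + A2 - (w • B1 + B2)).IsHermitian := hC.isHermitian.sub hD.isHermitian
  have hS : (w • (A1 - B1) - (2 : ℝ) • (w • A1 + A2 - (w • B1 + B2))).IsHermitian :=
    (hM.smul (.all w)).sub (hN.smul (.all 2))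
  rw [inv_sub_inv (iff_of_true hB1.isUnit hA1.isUnit),
    inv_sub_inv (iff_of_true hD.isUnit hC.isUnit),
    show A2 - B2 = w • A1 + A2 - (w • B1 + B2) - w • (A1 - B1) by module,
    trace_eq_completed_square w (isHermitian_iff_isSymm.mp hM) (isHermitian_iff_isSymm.mp hN)
      (isHermitian_iff_isSymm.mp hC.inv.isHermitian)
      (isHermitian_iff_isSymm.mp hD.inv.isHermitian)]
  have h1 := (hB1.inv.posSemidef.mul_mul_of_isHermitian hM).trace_mul_nonneg
    (hA1.inv_sub_smul_inv_smul_add_posSemidef hA2 hw)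
  have h2 := ((hB1.inv_sub_smul_inv_smul_add_posSemidef hB2 hw).mul_mul_of_isHermitian
    hM).trace_mul_nonneg hC.inv.posSemidef
  have h3 := (hD.inv.posSemidef.mul_mul_of_isHermitian hS).trace_mul_nonneg hC.inv.posSemidef
  exact add_nonneg (add_nonneg h1 (mul_nonneg hw.le h2)) h3
end

section
/- Let K be a positive integer, let N_1, ..., N_K be n×n real symmetric matrices with N_1 positive definite and N_k − N_{k−1} positive semidefinite for k = 2, ..., K (degradedness), and let Q̃_1, ..., Q̃_K and Q̂_1, ..., Q̂_K be n×n real positive semidefinite matrices with (Q̃_1, ..., Q̃_K) ≠ (Q̂_1, ..., Q̂_K). If r_1 ≥ r_2 ≥ ... ≥ r_K > 0 are real numbers, then Tr[ ∑_{k=1}^{K} r_k (Q̂_k − Q̃_k) ( (N_k + ∑_{i=1}^{k} Q̃_i)^{−1} − (N_k + ∑_{i=1}^{k} Q̂_i)^{−1} ) ] > 0. -/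
/-!
Write `A_k = N_k + ∑_{i ≤ k} Q̃_i`, `B_k = N_k + ∑_{i ≤ k} Q̂_i`, `S_k = B_k - A_k` (so `S_0 = 0`
and `S_k - S_{k-1} = Q̂_k - Q̃_k =: D_k`) and `q_k(X) = tr(X A_k⁻¹ X B_k⁻¹)`, a quadratic form
which is nonnegative on symmetric matrices and positive on nonzero ones. Since
`A_k⁻¹ - B_k⁻¹ = A_k⁻¹ S_k B_k⁻¹`, polarization gives
`2 tr(D_k (A_k⁻¹ - B_k⁻¹)) = q_k(S_k) - q_k(S_{k-1}) + q_k(D_k)`.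
Degradedness makes `A_k` and `B_k` Loewner-increasing in `k`, so their inverses decrease and
`q_k(S_{k-1}) ≤ q_{k-1}(S_{k-1})`. For nonnegative nonincreasing weights, summation by parts then
gives `∑ r_k (q_k(S_k) - q_k(S_{k-1})) ≥ r_K q_K(S_K) ≥ 0`, while `∑ r_k q_k(D_k) > 0` because
some `D_k ≠ 0`.
-/

open Finset Matrix
open scoped MatrixOrder

theorem mul_le_sum_Icc_mul_sub {r φ ψ : ℕ → ℝ} {m : ℕ} (hφ0 : φ 0 = 0)
    (hr : AntitoneOn r (Set.Icc 1 m)) (hr0 : ∀ k ∈ Icc 1 m, 0 ≤ r k)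
    (hφ : ∀ k ∈ Icc 1 m, 0 ≤ φ k) (hψ : ∀ k ∈ Icc 1 m, ψ k ≤ φ (k - 1)) :
    r m * φ m ≤ ∑ k ∈ Icc 1 m, r k * (φ k - ψ k) := by
  induction m with
  | zero => simp [hφ0]
  | succ m ih =>
    have hsub : Icc 1 m ⊆ Icc 1 (m + 1) := Icc_subset_Icc_right m.le_succ
    have hm1 : m + 1 ∈ Icc 1 (m + 1) := by simp
    have hIH := ih (hr.mono (Set.Icc_subset_Icc_right m.le_succ))
      (fun k hk ↦ hr0 k (hsub hk)) (fun k hk ↦ hφ k (hsub hk)) (fun k hk ↦ hψ k (hsub hk))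
    have hψm : r (m + 1) * ψ (m + 1) ≤ r (m + 1) * φ m :=
      mul_le_mul_of_nonneg_left (by simpa using hψ _ hm1) (hr0 _ hm1)
    have hdrop : r (m + 1) * φ m ≤ r m * φ m := by
      rcases m.eq_zero_or_pos with rfl | hm
      · simp [hφ0]
      · exact mul_le_mul_of_nonneg_right (hr ⟨hm, m.le_succ⟩ ⟨by omega, le_rfl⟩ m.le_succ)
          (hφ m (mem_Icc.mpr ⟨hm, m.le_succ⟩))
    rw [sum_Icc_succ_top (by omega)]
    linarith

theorem monotoneOn_sum_Icc {M : Type*} [AddCommMonoid M] [PartialOrder M] [IsOrderedAddMonoid M]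
    {f : ℕ → M} {K : ℕ} (hf : ∀ k ∈ Icc 1 K, 0 ≤ f k) :
    MonotoneOn (fun k ↦ ∑ i ∈ Icc 1 k, f i) (Set.Icc 1 K) := fun _ _ _ hk hjk ↦
  sum_le_sum_of_subset_of_nonneg (Icc_subset_Icc_right hjk) fun i hi _ ↦
    hf i (Icc_subset_Icc_right hk.2 hi)

namespace Matrix

variable {ι : Type*} {A B P Q X Y : Matrix ι ι ℝ}

theorem PosDef.of_le (hA : A.PosDef) (hAB : A ≤ B) : B.PosDef := by
  simpa using hA.add_posSemidef hAB

theorem posDef_add_sum_Icc {N Q : ℕ → Matrix ι ι ℝ} {K : ℕ} (hN1 : (N 1).PosDef)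
    (hN : MonotoneOn N (Set.Icc 1 K)) (hQ : ∀ k ∈ Icc 1 K, (Q k).PosSemidef) :
    ∀ k ∈ Icc 1 K, (N k + ∑ i ∈ Icc 1 k, Q i).PosDef := by
  intro k hk
  obtain ⟨hk1, hkK⟩ := mem_Icc.mp hk
  exact (hN1.of_le (hN ⟨le_rfl, hk1.trans hkK⟩ ⟨hk1, hkK⟩ hk1)).add_posSemidef
    (posSemidef_sum _ fun i hi ↦ hQ i (Icc_subset_Icc_right hkK hi))

variable [Fintype ι]

theorem PosSemidef.conj (hP : P.PosSemidef) (hX : X.IsHermitian) :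
    (X * P * X).PosSemidef := by
  have h := hP.mul_mul_conjTranspose_same X
  rwa [hX.eq] at h

theorem IsHermitian.trace_mul_mul_mul_comm (hX : X.IsHermitian) (hY : Y.IsHermitian)
    (hP : P.IsHermitian) (hQ : Q.IsHermitian) :
    (Y * P * X * Q).trace = (X * P * Y * Q).trace := by
  rw [← star_trivial (Y * P * X * Q).trace, ← trace_conjTranspose]
  simp only [conjTranspose_mul, hX.eq, hY.eq, hP.eq, hQ.eq]
  rw [trace_mul_comm]
  simp only [Matrix.mul_assoc]

theorem IsHermitian.two_mul_trace_sub_mul_mul_mul (hX : X.IsHermitian) (hY : Y.IsHermitian)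
    (hP : P.IsHermitian) (hQ : Q.IsHermitian) :
    2 * ((X - Y) * P * X * Q).trace =
      (X * P * X * Q).trace - (Y * P * Y * Q).trace + ((X - Y) * P * (X - Y) * Q).trace := by
  have := hX.trace_mul_mul_mul_comm hY hP hQ
  simp only [Matrix.mul_sub, Matrix.sub_mul, trace_sub]
  linarith

variable [DecidableEq ι]

theorem trace_mul_eq_trace_sqrt_mul_mul_sqrt (hB : B.PosSemidef) :
    (A * B).trace = (CFC.sqrt B * A * CFC.sqrt B).trace := by
  rw [Matrix.mul_assoc, trace_mul_comm (CFC.sqrt B), Matrix.mul_assoc,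
    CFC.sqrt_mul_sqrt_self B hB.nonneg]

theorem PosSemidef.sqrt_mul_mul_sqrt (hA : A.PosSemidef) (B : Matrix ι ι ℝ) :
    (CFC.sqrt B * A * CFC.sqrt B).PosSemidef :=
  hA.conj (CFC.sqrt_nonneg B).posSemidef.isHermitian

theorem PosSemidef.trace_mul_nonneg_s5 (hA : A.PosSemidef) (hB : B.PosSemidef) :
    0 ≤ (A * B).trace := by
  rw [trace_mul_eq_trace_sqrt_mul_mul_sqrt hB]
  exact (hA.sqrt_mul_mul_sqrt B).trace_nonneg

theorem PosSemidef.trace_mul_pos (hA : A.PosSemidef) (hA0 : A ≠ 0) (hB : B.PosDef) :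
    0 < (A * B).trace := by
  rw [trace_mul_eq_trace_sqrt_mul_mul_sqrt hB.posSemidef]
  have hT : IsUnit (CFC.sqrt B) := isUnit_of_mul_isUnit_left
    ((CFC.sqrt_mul_sqrt_self B hB.posSemidef.nonneg).symm ▸ hB.isUnit)
  refine (hA.sqrt_mul_mul_sqrt B).trace_nonneg.lt_of_ne' fun h ↦ hA0 ?_
  rw [(hA.sqrt_mul_mul_sqrt B).trace_eq_zero_iff] at h
  simpa [hT.mul_right_eq_zero, hT.mul_left_eq_zero] using h

theorem PosDef.inv_anti (hA : A.PosDef) (hAB : A ≤ B) : B⁻¹ ≤ A⁻¹ := by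
  have hB : B.PosDef := hA.of_le hAB
  have hE : (B - A).PosSemidef := hAB
  have hunit : IsUnit A ↔ IsUnit B := iff_of_true hA.isUnit hB.isUnit
  have key : A⁻¹ - B⁻¹ = B⁻¹ * (B - A + (B - A) * A⁻¹ * (B - A)) * B⁻¹ :=
    calc A⁻¹ - B⁻¹ = (B⁻¹ - (B⁻¹ - A⁻¹)) * (B - A) * B⁻¹ := by
          rw [sub_sub_cancel, inv_sub_inv hunit]
      _ = _ := by rw [inv_sub_inv hunit.symm]; noncomm_ring
  rw [le_iff, key]
  exact (hE.add (hA.inv.posSemidef.conj hE.isHermitian)).conj hB.inv.isHermitian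

namespace IsHermitian

theorem trace_mul_mul_mul_nonneg (hX : X.IsHermitian) (hP : P.PosSemidef)
    (hQ : Q.PosSemidef) : 0 ≤ (X * P * X * Q).trace :=
  (hP.conj hX).trace_mul_nonneg_s5 hQ

theorem trace_mul_mul_mul_pos (hX : X.IsHermitian) (hX0 : X ≠ 0) (hP : P.PosDef)
    (hQ : Q.PosDef) : 0 < (X * P * X * Q).trace := by
  have hXX : (X * X).PosSemidef := by
    have h := posSemidef_conjTranspose_mul_self X
    rwa [hX.eq] at h
  have hXX0 : X * X ≠ 0 := fun h ↦ hX0 <| by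
    rw [← trace_conjTranspose_mul_self_eq_zero_iff, hX.eq, h, trace_zero]
  have hXPX : 0 < (X * P * X).trace := by
    rw [trace_mul_cycle]
    exact hXX.trace_mul_pos hXX0 hP
  refine (hP.posSemidef.conj hX).trace_mul_pos (fun h ↦ ?_) hQ
  rw [h, trace_zero] at hXPX
  exact hXPX.false

theorem trace_mul_mul_mul_mono {P' Q' : Matrix ι ι ℝ} (hX : X.IsHermitian)
    (hP' : P'.PosSemidef) (hQ : Q.PosSemidef) (hPP : P' ≤ P) (hQQ : Q' ≤ Q) :
    (X * P' * X * Q').trace ≤ (X * P * X * Q).trace := by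
  have h₁ := (hP'.conj hX).trace_mul_nonneg_s5 (le_iff.mp hQQ)
  have h₂ := ((le_iff.mp hPP).conj hX).trace_mul_nonneg_s5 hQ
  simp only [Matrix.mul_sub, Matrix.sub_mul, trace_sub] at h₁ h₂
  linarith

theorem trace_mul_inv_mul_inv_anti {A' B' : Matrix ι ι ℝ} (hX : X.IsHermitian)
    (hA : A.PosDef) (hB : B.PosDef) (hAA : A ≤ A') (hBB : B ≤ B') :
    (X * A'⁻¹ * X * B'⁻¹).trace ≤ (X * A⁻¹ * X * B⁻¹).trace :=
  hX.trace_mul_mul_mul_mono (hA.of_le hAA).inv.posSemidef hB.inv.posSemidef (hA.inv_anti hAA)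
    (hB.inv_anti hBB)

end IsHermitian

theorem PosDef.two_mul_trace_mul_inv_sub_inv (hA : A.PosDef) (hB : B.PosDef)
    (hY : Y.IsHermitian) :
    2 * ((B - A - Y) * (A⁻¹ - B⁻¹)).trace =
      ((B - A) * A⁻¹ * (B - A) * B⁻¹).trace - (Y * A⁻¹ * Y * B⁻¹).trace +
        ((B - A - Y) * A⁻¹ * (B - A - Y) * B⁻¹).trace := by
  rw [← (hB.isHermitian.sub hA.isHermitian).two_mul_trace_sub_mul_mul_mul hY
      hA.inv.isHermitian hB.inv.isHermitian,
    inv_sub_inv (iff_of_true hA.isUnit hB.isUnit)]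
  simp only [Matrix.mul_assoc]

end Matrix

section

variable {ι : Type*} {A B : ℕ → Matrix ι ι ℝ} {r : ℕ → ℝ} {K : ℕ}

theorem isHermitian_sub_of_posDef (hA : ∀ k ∈ Icc 1 K, (A k).PosDef)
    (hB : ∀ k ∈ Icc 1 K, (B k).PosDef) (h0 : A 0 = B 0) :
    ∀ k ≤ K, (B k - A k).IsHermitian := by
  intro k hk
  rcases k.eq_zero_or_pos with rfl | hk0
  · rw [h0, sub_self]
    exact isHermitian_zero
  · exact (hB k (mem_Icc.mpr ⟨hk0, hk⟩)).isHermitian.sub (hA k (mem_Icc.mpr ⟨hk0, hk⟩)).isHermitian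

variable [Fintype ι] [DecidableEq ι]

theorem sum_Icc_mul_trace_sub_nonneg (hA : ∀ k ∈ Icc 1 K, (A k).PosDef)
    (hB : ∀ k ∈ Icc 1 K, (B k).PosDef) (hAmono : MonotoneOn A (Set.Icc 1 K))
    (hBmono : MonotoneOn B (Set.Icc 1 K)) (h0 : A 0 = B 0) (hr : AntitoneOn r (Set.Icc 1 K))
    (hr0 : ∀ k ∈ Icc 1 K, 0 ≤ r k) :
    0 ≤ ∑ k ∈ Icc 1 K, r k * (((B k - A k) * (A k)⁻¹ * (B k - A k) * (B k)⁻¹).trace -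
      ((B (k - 1) - A (k - 1)) * (A k)⁻¹ * (B (k - 1) - A (k - 1)) * (B k)⁻¹).trace) := by
  have hS := isHermitian_sub_of_posDef hA hB h0
  have hφ : ∀ k ∈ Icc 1 K, 0 ≤ ((B k - A k) * (A k)⁻¹ * (B k - A k) * (B k)⁻¹).trace :=
    fun k hk ↦ (hS k (mem_Icc.mp hk).2).trace_mul_mul_mul_nonneg (hA k hk).inv.posSemidef
      (hB k hk).inv.posSemidef
  refine le_trans ?_ (mul_le_sum_Icc_mul_sub (by simp [h0]) hr hr0 hφ fun k hk ↦ ?_)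
  · rcases K.eq_zero_or_pos with rfl | hK
    · simp [h0]
    · exact mul_nonneg (hr0 K (mem_Icc.mpr ⟨hK, le_rfl⟩)) (hφ K (mem_Icc.mpr ⟨hK, le_rfl⟩))
  · obtain ⟨hk1, hkK⟩ := mem_Icc.mp hk
    rcases hk1.eq_or_lt with rfl | hk2
    · simp [h0]
    have hk' : k - 1 ∈ Set.Icc 1 K := ⟨by omega, (k.sub_le 1).trans hkK⟩
    exact (hS (k - 1) hk'.2).trace_mul_inv_mul_inv_anti (hA (k - 1) (mem_Icc.mpr hk'))
      (hB (k - 1) (mem_Icc.mpr hk')) (hAmono hk' ⟨hk1, hkK⟩ (k.sub_le 1))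
      (hBmono hk' ⟨hk1, hkK⟩ (k.sub_le 1))

theorem trace_sum_smul_mul_inv_sub_inv_pos (hA : ∀ k ∈ Icc 1 K, (A k).PosDef)
    (hB : ∀ k ∈ Icc 1 K, (B k).PosDef) (hAmono : MonotoneOn A (Set.Icc 1 K))
    (hBmono : MonotoneOn B (Set.Icc 1 K)) (h0 : A 0 = B 0) (hr : AntitoneOn r (Set.Icc 1 K))
    (hrK : 0 < r K) (hne : ∃ k ∈ Icc 1 K, B k - A k - (B (k - 1) - A (k - 1)) ≠ 0) :
    0 < (∑ k ∈ Icc 1 K,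
      r k • ((B k - A k - (B (k - 1) - A (k - 1))) * ((A k)⁻¹ - (B k)⁻¹))).trace := by
  let q (k : ℕ) (X : Matrix ι ι ℝ) : ℝ := (X * (A k)⁻¹ * X * (B k)⁻¹).trace
  obtain ⟨m, hm, hm0⟩ := hne
  have hS := isHermitian_sub_of_posDef hA hB h0
  have hS' : ∀ k ∈ Icc 1 K, (B (k - 1) - A (k - 1)).IsHermitian := fun k hk ↦
    hS (k - 1) ((k.sub_le 1).trans (mem_Icc.mp hk).2)
  have hD : ∀ k ∈ Icc 1 K, (B k - A k - (B (k - 1) - A (k - 1))).IsHermitian := fun k hk ↦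
    (hS k (mem_Icc.mp hk).2).sub (hS' k hk)
  have hr0 : ∀ k ∈ Icc 1 K, 0 < r k := fun k hk ↦
    hrK.trans_le (hr (mem_Icc.mp hk) ⟨(mem_Icc.mp hm).1.trans (mem_Icc.mp hm).2, le_rfl⟩
      (mem_Icc.mp hk).2)
  have hterm : ∀ k ∈ Icc 1 K,
      2 * (r k • ((B k - A k - (B (k - 1) - A (k - 1))) * ((A k)⁻¹ - (B k)⁻¹))).trace =
        r k * (q k (B k - A k) - q k (B (k - 1) - A (k - 1))) +
          r k * q k (B k - A k - (B (k - 1) - A (k - 1))) := by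
    intro k hk
    rw [trace_smul, smul_eq_mul, mul_left_comm,
      (hA k hk).two_mul_trace_mul_inv_sub_inv (hB k hk) (hS' k hk)]
    ring
  have hdiag : 0 < ∑ k ∈ Icc 1 K, r k * q k (B k - A k - (B (k - 1) - A (k - 1))) :=
    sum_pos' (fun k hk ↦ mul_nonneg (hr0 k hk).le
        ((hD k hk).trace_mul_mul_mul_nonneg (hA k hk).inv.posSemidef (hB k hk).inv.posSemidef))
      ⟨m, hm, mul_pos (hr0 m hm) ((hD m hm).trace_mul_mul_mul_pos hm0 (hA m hm).inv (hB m hm).inv)⟩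
  have habel := sum_Icc_mul_trace_sub_nonneg hA hB hAmono hBmono h0 hr fun k hk ↦ (hr0 k hk).le
  have key := mul_sum (Icc 1 K) (fun k ↦
    (r k • ((B k - A k - (B (k - 1) - A (k - 1))) * ((A k)⁻¹ - (B k)⁻¹))).trace) 2
  rw [sum_congr rfl hterm, sum_add_distrib, ← trace_sum] at key
  linarith

end

theorem adbc_dsc_pos_general (n K : ℕ)
    (N Qt Qh : ℕ → Matrix (Fin n) (Fin n) ℝ)
    (hN1 : (N 1).PosDef)
    (hdeg : ∀ k ∈ Finset.Icc 2 K, (N k - N (k - 1)).PosSemidef)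
    (hQt : ∀ k ∈ Finset.Icc 1 K, (Qt k).PosSemidef)
    (hQh : ∀ k ∈ Finset.Icc 1 K, (Qh k).PosSemidef)
    (hne : ∃ k ∈ Finset.Icc 1 K, Qt k ≠ Qh k)
    (r : ℕ → ℝ)
    (hrmono : ∀ k ∈ Finset.Icc 1 (K - 1), r (k + 1) ≤ r k)
    (hrK : 0 < r K) :
    0 < Matrix.trace (∑ k ∈ Finset.Icc 1 K,
      r k • ((Qh k - Qt k) *
        ((N k + ∑ i ∈ Finset.Icc 1 k, Qt i)⁻¹ -
         (N k + ∑ i ∈ Finset.Icc 1 k, Qh i)⁻¹))) := by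
  have hN : MonotoneOn N (Set.Icc 1 K) :=
    monotoneOn_of_le_add_one Set.ordConnected_Icc fun k _ hk hk1 ↦
      le_iff.mpr (by simpa using hdeg (k + 1) (mem_Icc.mpr ⟨Nat.succ_le_succ hk.1, hk1.2⟩))
  have hr : AntitoneOn r (Set.Icc 1 K) :=
    antitoneOn_of_add_one_le Set.ordConnected_Icc fun k _ hk hk1 ↦
      hrmono k (mem_Icc.mpr ⟨hk.1, Nat.le_sub_one_of_lt hk1.2⟩)
  have hcum {Q : ℕ → Matrix (Fin n) (Fin n) ℝ} (hQ : ∀ k ∈ Icc 1 K, (Q k).PosSemidef) :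
      MonotoneOn (fun k ↦ N k + ∑ i ∈ Icc 1 k, Q i) (Set.Icc 1 K) :=
    hN.add (monotoneOn_sum_Icc fun k hk ↦ (hQ k hk).nonneg)
  have hD : ∀ k ∈ Icc 1 K, Qh k - Qt k =
      N k + ∑ i ∈ Icc 1 k, Qh i - (N k + ∑ i ∈ Icc 1 k, Qt i) -
        (N (k - 1) + ∑ i ∈ Icc 1 (k - 1), Qh i - (N (k - 1) + ∑ i ∈ Icc 1 (k - 1), Qt i)) := by
    intro k hk
    obtain ⟨j, rfl⟩ := Nat.exists_eq_add_of_le' (mem_Icc.mp hk).1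
    simp only [sum_Icc_succ_top (Nat.le_add_left 1 j), Nat.add_sub_cancel]
    abel
  rw [sum_congr rfl fun k hk ↦ by rw [hD k hk]]
  refine trace_sum_smul_mul_inv_sub_inv_pos (posDef_add_sum_Icc hN1 hN hQt)
    (posDef_add_sum_Icc hN1 hN hQh) (hcum hQt) (hcum hQh) (by simp) hr hrK ?_
  obtain ⟨k, hk, hne⟩ := hne
  exact ⟨k, hk, hD k hk ▸ sub_ne_zero.mpr hne.symm⟩

/-- DSC quantity of the ADBC game is strictly positive at distinct feasible
points for ordered weights `r₁ ≥ r₂ ≥ … ≥ r_K > 0`. -/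
theorem adbc_dsc_pos (n K : ℕ) (hK : 0 < K)
    (N Qt Qh : ℕ → Matrix (Fin n) (Fin n) ℝ)
    (hNsymm : ∀ k ∈ Finset.Icc 1 K, (N k).IsSymm)
    (hN1 : (N 1).PosDef)
    (hdeg : ∀ k ∈ Finset.Icc 2 K, (N k - N (k - 1)).PosSemidef)
    (hQt : ∀ k ∈ Finset.Icc 1 K, (Qt k).PosSemidef)
    (hQh : ∀ k ∈ Finset.Icc 1 K, (Qh k).PosSemidef)
    (hne : ∃ k ∈ Finset.Icc 1 K, Qt k ≠ Qh k)
    (r : ℕ → ℝ)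
    (hrmono : ∀ k ∈ Finset.Icc 1 (K - 1), r (k + 1) ≤ r k)
    (hrK : 0 < r K) :
    0 < Matrix.trace (∑ k ∈ Finset.Icc 1 K,
      r k • ((Qh k - Qt k) *
        ((N k + ∑ i ∈ Finset.Icc 1 k, Qt i)⁻¹ -
         (N k + ∑ i ∈ Finset.Icc 1 k, Qh i)⁻¹))) :=
  adbc_dsc_pos_general n K N Qt Qh hN1 hdeg hQt hQh hne r hrmono hrK
end
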